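/- Let λ : (0,∞) → (0,1/4) be the inverse of θ(λ) = -1 + Artanh(√(1-4λ))/√(1-4λ), and define f(θ) = -log(λ(θ)) - 2θ - θ·log(1-4λ(θ)). Then f satisfies 1 = 4λ(θ) + exp(-f'(θ)) for all θ > 0. -/

import Mathlib

/-!
With `s = √(1 - 4λ)`, so that `λ = (1 - s²)/4`, differentiating `θ(λ) = artanh s / s - 1` gives
`θ'(λ) = -(1/λ - 4θ/(1 - 4λ))/2`. This is negative because `artanh s < s/(1 - s²)`, which is
`t < sinh t` at `t = 2 artanh s`; so `θ` is strictly decreasing and its inverse `λ` is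
differentiable with `λ' = 1/θ'(λ)`. In `f' = -log(1 - 4λ) - 2 - λ' (1/λ - 4θ/(1 - 4λ))` the last
term is then `-2`, leaving `f' = -log(1 - 4λ)`.
-/

open Real Filter Set Topology

noncomputable def artanh (x : ℝ) : ℝ := (1/2) * Real.log ((1+x)/(1-x))

noncomputable def thetaF (l : ℝ) : ℝ := -1 + _root_.artanh (Real.sqrt (1-4*l)) / Real.sqrt (1-4*l)

lemma artanh_eq_real_artanh {s : ℝ} (hs : s ∈ Ioo (-1 : ℝ) 1) : _root_.artanh s = Real.artanh s :=
  (Real.artanh_eq_half_log (Ioo_subset_Icc_self hs)).symm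

lemma hasDerivAt_artanh {s : ℝ} (hs : s ∈ Ioo (-1 : ℝ) 1) :
    HasDerivAt _root_.artanh (1 / (1 - s ^ 2)) s := by
  obtain ⟨h1, h2⟩ := hs
  have hq : HasDerivAt (fun x => (1 + x) / (1 - x)) (2 / (1 - s) ^ 2) s :=
    (((hasDerivAt_id' s).const_add 1).div ((hasDerivAt_id' s).const_sub 1)
      (sub_ne_zero.2 h2.ne')).congr_deriv (by ring)
  refine ((hq.log (div_pos (by linarith) (by linarith)).ne').const_mul (1 / 2)).congr_deriv ?_
  have : 1 + s ≠ 0 := by linarith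
  have : 1 - s ≠ 0 := by linarith
  have : 1 - s ^ 2 ≠ 0 := by nlinarith
  field_simp
  ring

lemma artanh_lt_div_one_sub_sq {s : ℝ} (hs : s ∈ Ioo (0 : ℝ) 1) :
    _root_.artanh s < s / (1 - s ^ 2) := by
  have hs' : s ∈ Ioo (-1 : ℝ) 1 := ⟨by linarith [hs.1], hs.2⟩
  have hsq : 0 < 1 - s ^ 2 := by nlinarith [hs.1, hs.2]
  have h2t := Real.self_lt_sinh_iff.2 (mul_pos two_pos (Real.artanh_pos hs))
  rw [Real.sinh_two_mul, Real.sinh_artanh hs', Real.cosh_artanh hs'] at h2t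
  rw [artanh_eq_real_artanh hs']
  calc Real.artanh s < s / √(1 - s ^ 2) * (1 / √(1 - s ^ 2)) := by linarith
    _ = s / (1 - s ^ 2) := by
      rw [div_mul_div_comm, mul_one, Real.mul_self_sqrt hsq.le]

lemma sqrt_one_sub_four_mul_mem {l : ℝ} (hl : l ∈ Ioo (0 : ℝ) (1/4)) :
    √(1 - 4 * l) ∈ Ioo (0 : ℝ) 1 :=
  ⟨Real.sqrt_pos.2 (by linarith [hl.2]), (Real.sqrt_lt' one_pos).2 (by linarith [hl.1])⟩

lemma hasDerivAt_thetaF {l : ℝ} (hl : l ∈ Ioo (0 : ℝ) (1/4)) :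
    HasDerivAt thetaF (-(1 / l - 4 * thetaF l / (1 - 4 * l)) / 2) l := by
  have hpos : 0 < 1 - 4 * l := by linarith [hl.2]
  obtain ⟨hs0, hs1⟩ := sqrt_one_sub_four_mul_mem hl
  have hsq : √(1 - 4 * l) ^ 2 = 1 - 4 * l := Real.sq_sqrt hpos.le
  have hw : HasDerivAt (fun l => √(1 - 4 * l)) (-4 / (2 * √(1 - 4 * l))) l :=
    (((hasDerivAt_id' l).const_mul 4).const_sub 1).sqrt hpos.ne' |>.congr_deriv (by ring)
  have hg := ((hasDerivAt_artanh ⟨by linarith, hs1⟩).div (hasDerivAt_id' _) hs0.ne').const_add (-1)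
  refine (hg.comp l hw).congr_deriv ?_
  unfold thetaF
  generalize √(1 - 4 * l) = s at *
  obtain rfl : l = (1 - s ^ 2) / 4 := by linarith
  have : 1 - s ^ 2 ≠ 0 := by nlinarith
  field_simp
  ring

lemma four_mul_thetaF_div_lt {l : ℝ} (hl : l ∈ Ioo (0 : ℝ) (1/4)) :
    4 * thetaF l / (1 - 4 * l) < 1 / l := by
  have hs := sqrt_one_sub_four_mul_mem hl
  have hA := artanh_lt_div_one_sub_sq hs
  have hsq : √(1 - 4 * l) ^ 2 = 1 - 4 * l := Real.sq_sqrt (by linarith [hl.2])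
  unfold thetaF
  generalize √(1 - 4 * l) = s at *
  obtain rfl : l = (1 - s ^ 2) / 4 := by linarith
  obtain ⟨hs0, hs1⟩ := hs
  have h1 : 0 < 1 - s ^ 2 := by nlinarith
  have hA' : _root_.artanh s / s < 1 / (1 - s ^ 2) := by
    rw [div_lt_iff₀ hs0]; rwa [div_mul_eq_mul_div, one_mul]
  calc 4 * (-1 + _root_.artanh s / s) / (1 - 4 * ((1 - s ^ 2) / 4))
      < 4 * (-1 + 1 / (1 - s ^ 2)) / s ^ 2 := by
        rw [show 1 - 4 * ((1 - s ^ 2) / 4) = s ^ 2 by ring]; gcongr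
    _ = 1 / ((1 - s ^ 2) / 4) := by field_simp; ring

lemma strictAntiOn_thetaF : StrictAntiOn thetaF (Ioo (0 : ℝ) (1/4)) := by
  refine strictAntiOn_of_deriv_neg (convex_Ioo 0 (1/4))
    (fun l hl => (hasDerivAt_thetaF hl).continuousAt.continuousWithinAt) fun l hl => ?_
  rw [interior_Ioo] at hl
  rw [(hasDerivAt_thetaF hl).deriv]
  linarith [four_mul_thetaF_div_lt hl]

lemma StrictAntiOn.continuousAt_of_image_mem_nhds {f : ℝ → ℝ} {s : Set ℝ} {a : ℝ}
    (hf : StrictAntiOn f s) (hs : s ∈ 𝓝 a) (hfs : f '' s ∈ 𝓝 (f a)) : ContinuousAt f a := by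
  have hneg : (fun x => -f x) '' s ∈ 𝓝 (-f a) := by
    rw [← Set.image_image (g := Neg.neg), Set.image_neg_eq_neg]
    exact continuous_neg.continuousAt.preimage_mem_nhds (by rwa [neg_neg])
  simpa only [neg_neg] using (hf.neg.continuousAt_of_image_mem_nhds hs hneg).fun_neg

lemma hasDerivAt_of_leftInvOn_of_strictAntiOn {g h : ℝ → ℝ} {s t : Set ℝ} {a g' : ℝ}
    (hg : StrictAntiOn g s) (hs : s ∈ 𝓝 (h a)) (hmaps : MapsTo h t s) (hinv : LeftInvOn g h t)
    (ht : t ∈ 𝓝 a) (hg' : HasDerivAt g g' (h a)) (hg'0 : g' ≠ 0) : HasDerivAt h g'⁻¹ a := by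
  have hanti : StrictAntiOn h t := fun x hx y hy hxy =>
    (hg.lt_iff_gt (hmaps hx) (hmaps hy)).1 (by rwa [hinv hx, hinv hy])
  have himage : h '' t ∈ 𝓝 (h a) := by
    filter_upwards [hs, hg'.continuousAt.preimage_mem_nhds (by rwa [hinv (mem_of_mem_nhds ht)])]
      with x hxs hxt
    exact ⟨g x, hxt, hg.injOn (hmaps hxt) hxs (hinv hxt)⟩
  exact hg'.of_local_left_inverse (hanti.continuousAt_of_image_mem_nhds ht himage) hg'0
    (eventually_of_mem ht hinv)

lemma hasDerivAt_neg_log_sub_mul_log {μ : ℝ → ℝ} {μ' θ : ℝ} (hμ : HasDerivAt μ μ' θ)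
    (h0 : μ θ ≠ 0) (h1 : 1 - 4 * μ θ ≠ 0)
    (hode : μ' * (1 / μ θ - 4 * θ / (1 - 4 * μ θ)) = -2) :
    HasDerivAt (fun t => -log (μ t) - 2 * t - t * log (1 - 4 * μ t)) (-log (1 - 4 * μ θ)) θ :=
  (((hμ.log h0).neg.sub ((hasDerivAt_id' θ).const_mul 2)).sub
    ((hasDerivAt_id' θ).mul (((hμ.const_mul 4).const_sub 1).log h1))).congr_deriv
    (by linear_combination -hode)

theorem stmt8 (lam : ℝ → ℝ)
    (hmem : ∀ θ > (0:ℝ), lam θ ∈ Set.Ioo (0:ℝ) (1/4))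
    (hinv : ∀ θ > (0:ℝ), thetaF (lam θ) = θ)
    (f : ℝ → ℝ)
    (hf : ∀ θ, f θ = -Real.log (lam θ) - 2*θ - θ * Real.log (1 - 4 * lam θ)) :
    ∀ θ > (0:ℝ), 1 = 4 * lam θ + Real.exp (-(deriv f θ)) := by
  intro θ hθ
  have hl := hmem θ hθ
  have h4l : 0 < 1 - 4 * lam θ := by linarith [hl.2]
  have hD := hasDerivAt_thetaF hl
  have hlt : 4 * thetaF (lam θ) / (1 - 4 * lam θ) < 1 / lam θ := four_mul_thetaF_div_lt hl
  rw [hinv θ hθ] at hD hlt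
  have hlam := hasDerivAt_of_leftInvOn_of_strictAntiOn strictAntiOn_thetaF
    (isOpen_Ioo.mem_nhds hl) (fun t ht => hmem t ht) (fun t ht => hinv t ht) (Ioi_mem_nhds hθ)
    hD (by linarith)
  have hode : (-(1 / lam θ - 4 * θ / (1 - 4 * lam θ)) / 2)⁻¹ *
      (1 / lam θ - 4 * θ / (1 - 4 * lam θ)) = -2 := by
    have hX : 1 / lam θ - 4 * θ / (1 - 4 * lam θ) ≠ 0 := by linarith
    generalize 1 / lam θ - 4 * θ / (1 - 4 * lam θ) = X at hX ⊢
    field_simp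
  have hf' := hasDerivAt_neg_log_sub_mul_log hlam hl.1.ne' h4l.ne' hode
  rw [show f = _ from funext hf, hf'.deriv, neg_neg, exp_log h4l]
  ring
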